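/- Let (Λ, d) be a finite metric space and for each x ∈ Λ let V_x be a finite-dimensional nonzero complex vector space; let 𝓗 = ⨂_{x ∈ Λ} V_x. Say a linear endomorphism W of 𝓗 is supported on a subset S ⊆ Λ if, under the canonical linear equivalence 𝓗 ≃ (⨂_{x ∈ S} V_x) ⊗ (⨂_{x ∉ S} V_x), W corresponds to W_S ⊗ id for some linear endomorphism W_S of ⨂_{x ∈ S} V_x. Let r > 0, let Y ⊆ Λ, let A be an endomorphism of 𝓗 supported on Y, let b be a positive natural number, and for k ∈ {1,…,b} let V_k be invertible endomorphisms of 𝓗 that commute pairwise and such that V_k is supported on the open ball B(j_k, r) = {y ∈ Λ : d(j_k, y) < r} for some j_k ∈ Λ. Let V = V₁·V₂⋯V_b. Then V⁻¹·A·V is supported on B_{2r}(Y) = {y ∈ Λ : ∃ x ∈ Y, d(x,y) < 2r}. -/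

import Mathlib

set_option linter.unusedSectionVars false
open scoped TensorProduct
open PiTensorProduct

noncomputable section

variable {Λ : Type*} (V : Λ → Type*) [∀ x, AddCommGroup (V x)] [∀ x, Module ℂ (V x)]

/-- The canonical linear map `(⨂_{x ∈ S} V_x) ⊗ (⨂_{x ∉ S} V_x) →ₗ ⨂_{x ∈ Λ} V_x`
combining a tensor over `S` and a tensor over its complement to a tensor over all of `Λ`
(it is the inverse of the canonical reindexing equivalence along the partition of `Λ`
into `S` and its complement). -/
def assemble (S : Set Λ) :
    ((⨂[ℂ] x : {a : Λ // a ∈ S}, V x) ⊗[ℂ] (⨂[ℂ] x : {a : Λ // ¬a ∈ S}, V x)) →ₗ[ℂ]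
      ⨂[ℂ] x : Λ, V x := by
  classical
  exact TensorProduct.lift
    ((PiTensorProduct.lift.toLinearMap ∘ₗ
      PiTensorProduct.lift
        ((PiTensorProduct.tprod ℂ (s := V)).domDomRestrictₗ (· ∈ S))).flip)

/-- A linear endomorphism `W` of `⨂_{x ∈ Λ} V_x` is supported on `S ⊆ Λ` if, under the
canonical equivalence `⨂_{x ∈ Λ} V_x ≃ (⨂_{x ∈ S} V_x) ⊗ (⨂_{x ∉ S} V_x)`, it
corresponds to `W_S ⊗ id` for some linear endomorphism `W_S` of `⨂_{x ∈ S} V_x`. -/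
def SupportedOn (S : Set Λ)
    (W : (⨂[ℂ] x : Λ, V x) →ₗ[ℂ] ⨂[ℂ] x : Λ, V x) : Prop :=
  ∃ WS : (⨂[ℂ] x : {a : Λ // a ∈ S}, V x) →ₗ[ℂ] ⨂[ℂ] x : {a : Λ // a ∈ S}, V x,
    W ∘ₗ assemble V S = assemble V S ∘ₗ TensorProduct.map WS LinearMap.id


section Generic

open scoped Classical

variable {ι : Type*} {M : ι → Type*} [∀ i, AddCommGroup (M i)] [∀ i, Module ℂ (M i)]


/-- Combine a family over `P` and a family over `¬P` into a family over `ι`. -/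
def mixF (P : ι → Prop) (f : ∀ i : {a // P a}, M i) (g : ∀ i : {a // ¬ P a}, M i) :
    ∀ i, M i := fun i => if h : P i then f ⟨i, h⟩ else g ⟨i, h⟩

/-- Generic merge map. -/
def mrg (P : ι → Prop) :
    ((⨂[ℂ] i : {a // P a}, M i) ⊗[ℂ] (⨂[ℂ] i : {a // ¬ P a}, M i)) →ₗ[ℂ] ⨂[ℂ] i, M i :=
  TensorProduct.lift
    ((PiTensorProduct.lift.toLinearMap ∘ₗ
      PiTensorProduct.lift
        ((PiTensorProduct.tprod ℂ (s := M)).domDomRestrictₗ P)).flip)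

@[simp] lemma mrg_tmul (P : ι → Prop) (f : ∀ i : {a // P a}, M i)
    (g : ∀ i : {a // ¬ P a}, M i) :
    mrg P (tprod ℂ f ⊗ₜ[ℂ] tprod ℂ g) = tprod ℂ (mixF P f g) := by
  simp only [mrg, TensorProduct.lift.tmul, LinearMap.flip_apply, LinearMap.comp_apply,
    LinearEquiv.coe_toLinearMap, PiTensorProduct.lift.tprod]
  rfl
lemma restrict_update_mem [DecidableEq ι] (P : ι → Prop) (v : ∀ i, M i) (i₀ : ι) (h : P i₀) (a : M i₀) :
    (fun i : {a // P a} => Function.update v i₀ a i) =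
      Function.update (fun i : {a // P a} => v i) ⟨i₀, h⟩ a := by
  funext i
  rcases i with ⟨i, hi⟩
  by_cases hii : i = i₀
  · subst hii
    simp
  · rw [Function.update_of_ne hii]
    exact (Function.update_of_ne
      (show (⟨i, hi⟩ : {a // P a}) ≠ ⟨i₀, h⟩ by simp [Subtype.ext_iff, hii]) a (fun j : {a // P a} => v j)).symm

lemma restrict_update_not_mem [DecidableEq ι] (P : ι → Prop) (v : ∀ i, M i) (i₀ : ι) (h : ¬ P i₀) (a : M i₀) :
    (fun i : {a // P a} => Function.update v i₀ a i) = (fun i : {a // P a} => v i) := by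
  funext i
  exact Function.update_of_ne (fun hh => h (by rw [← hh]; exact i.2)) a v

/-- The multilinear splitting map. -/
def splitML (P : ι → Prop) :
    MultilinearMap ℂ M
      ((⨂[ℂ] i : {a // P a}, M i) ⊗[ℂ] (⨂[ℂ] i : {a // ¬ P a}, M i)) where
  toFun v := tprod ℂ (fun i : {a // P a} => v i) ⊗ₜ[ℂ] tprod ℂ (fun i : {a // ¬ P a} => v i)
  map_update_add' v i₀ a b := by
    by_cases h : P i₀
    · rw [restrict_update_mem P _ i₀ h, restrict_update_mem P _ i₀ h,
        restrict_update_mem P _ i₀ h,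
        restrict_update_not_mem (fun a => ¬ P a) _ i₀ (not_not_intro h),
        restrict_update_not_mem (fun a => ¬ P a) _ i₀ (not_not_intro h),
        restrict_update_not_mem (fun a => ¬ P a) _ i₀ (not_not_intro h)]
      rw [MultilinearMap.map_update_add]
      rw [TensorProduct.add_tmul]
    · rw [restrict_update_not_mem P _ i₀ h, restrict_update_not_mem P _ i₀ h,
        restrict_update_not_mem P _ i₀ h,
        restrict_update_mem (fun a => ¬ P a) _ i₀ h,
        restrict_update_mem (fun a => ¬ P a) _ i₀ h,
        restrict_update_mem (fun a => ¬ P a) _ i₀ h]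
      rw [MultilinearMap.map_update_add]
      rw [TensorProduct.tmul_add]
  map_update_smul' v i₀ c a := by
    by_cases h : P i₀
    · rw [restrict_update_mem P _ i₀ h, restrict_update_mem P _ i₀ h,
        restrict_update_not_mem (fun a => ¬ P a) _ i₀ (not_not_intro h),
        restrict_update_not_mem (fun a => ¬ P a) _ i₀ (not_not_intro h)]
      rw [MultilinearMap.map_update_smul]
      rw [TensorProduct.smul_tmul']
    · rw [restrict_update_not_mem P _ i₀ h, restrict_update_not_mem P _ i₀ h,
        restrict_update_mem (fun a => ¬ P a) _ i₀ h,
        restrict_update_mem (fun a => ¬ P a) _ i₀ h]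
      rw [MultilinearMap.map_update_smul]
      rw [TensorProduct.tmul_smul]

def splt (P : ι → Prop) :
    (⨂[ℂ] i, M i) →ₗ[ℂ]
      ((⨂[ℂ] i : {a // P a}, M i) ⊗[ℂ] (⨂[ℂ] i : {a // ¬ P a}, M i)) :=
  PiTensorProduct.lift (splitML P)

@[simp] lemma splt_tprod (P : ι → Prop) (v : ∀ i, M i) :
    splt P (tprod ℂ v) =
      tprod ℂ (fun i : {a // P a} => v i) ⊗ₜ[ℂ] tprod ℂ (fun i : {a // ¬ P a} => v i) := by
  simp [splt]
  rfl

end Generic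


section Generic2
open scoped Classical
variable {ι : Type*} {M : ι → Type*} [∀ i, AddCommGroup (M i)] [∀ i, Module ℂ (M i)]

lemma pi_ext {N : Type*} [AddCommGroup N] [Module ℂ N]
    {F G : (⨂[ℂ] i, M i) →ₗ[ℂ] N} (h : ∀ f, F (tprod ℂ f) = G (tprod ℂ f)) : F = G :=
  PiTensorProduct.ext (MultilinearMap.ext h)

lemma ext₂ {ι₂ : Type*} {M₂ : ι₂ → Type*} [∀ i, AddCommGroup (M₂ i)] [∀ i, Module ℂ (M₂ i)]
    {N : Type*} [AddCommGroup N] [Module ℂ N]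
    {F G : ((⨂[ℂ] i, M i) ⊗[ℂ] (⨂[ℂ] i, M₂ i)) →ₗ[ℂ] N}
    (h : ∀ f g, F (tprod ℂ f ⊗ₜ[ℂ] tprod ℂ g) = G (tprod ℂ f ⊗ₜ[ℂ] tprod ℂ g)) : F = G := by
  apply TensorProduct.ext
  apply pi_ext; intro f
  apply pi_ext; intro g
  simpa using h f g

lemma mixF_restrict (P : ι → Prop) (v : ∀ i, M i) :
    mixF (M := M) P (fun i : {a // P a} => v i) (fun i : {a // ¬ P a} => v i) = v := by
  funext i
  by_cases h : P i <;> simp [mixF, h]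

@[simp] lemma mixF_fst (P : ι → Prop) (f : ∀ i : {a // P a}, M i) (g : ∀ i : {a // ¬ P a}, M i) :
    (fun i : {a // P a} => mixF (M := M) P f g i) = f := by
  funext i; simp [mixF, i.2]

@[simp] lemma mixF_snd (P : ι → Prop) (f : ∀ i : {a // P a}, M i) (g : ∀ i : {a // ¬ P a}, M i) :
    (fun i : {a // ¬ P a} => mixF (M := M) P f g i) = g := by
  funext i; simp [mixF, i.2]

lemma mrg_splt (P : ι → Prop) : mrg (M := M) P ∘ₗ splt P = LinearMap.id := by
  apply pi_ext; intro v
  simp [mixF_restrict]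

lemma splt_mrg (P : ι → Prop) : splt (M := M) P ∘ₗ mrg P = LinearMap.id := by
  apply ext₂; intro f g
  simp

/-- The merge linear equivalence. -/
def mrgE (P : ι → Prop) :
    ((⨂[ℂ] i : {a // P a}, M i) ⊗[ℂ] (⨂[ℂ] i : {a // ¬ P a}, M i)) ≃ₗ[ℂ] ⨂[ℂ] i, M i :=
  LinearEquiv.ofLinear (mrg P) (splt P) (mrg_splt P) (splt_mrg P)

lemma mrg_bijective (P : ι → Prop) : Function.Bijective (mrg (M := M) P) :=
  (mrgE P).bijective

end Generic2

-- Λ-specific section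
section Supp
open scoped Classical
variable {Λ : Type*} (V : Λ → Type*) [∀ x, AddCommGroup (V x)] [∀ x, Module ℂ (V x)]

lemma assemble_eq (S : Set Λ) :
    assemble V S = mrg (M := fun x : Λ => V x) (· ∈ S) := rfl

@[simp] lemma assemble_tmul (S : Set Λ) (f : ∀ x : {a : Λ // a ∈ S}, V x)
    (g : ∀ x : {a : Λ // ¬ a ∈ S}, V x) :
    assemble V S (tprod ℂ f ⊗ₜ[ℂ] tprod ℂ g) = tprod ℂ (mixF (· ∈ S) f g) := by
  rw [assemble_eq]; exact mrg_tmul _ f g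

end Supp

section Supp2
open scoped Classical
variable {Λ : Type*} (V : Λ → Type*) [∀ x, AddCommGroup (V x)] [∀ x, Module ℂ (V x)]

lemma supp_id (S : Set Λ) : SupportedOn V S LinearMap.id :=
  ⟨LinearMap.id, by rw [TensorProduct.map_id]; simp⟩

lemma supp_comp {S : Set Λ} {W₁ W₂ : (⨂[ℂ] x : Λ, V x) →ₗ[ℂ] ⨂[ℂ] x : Λ, V x}
    (h₁ : SupportedOn V S W₁) (h₂ : SupportedOn V S W₂) :
    SupportedOn V S (W₁ ∘ₗ W₂) := by
  obtain ⟨X₁, hX₁⟩ := h₁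
  obtain ⟨X₂, hX₂⟩ := h₂
  refine ⟨X₁ ∘ₗ X₂, ?_⟩
  have : TensorProduct.map (X₁ ∘ₗ X₂) (LinearMap.id (M := ⨂[ℂ] x : {a : Λ // ¬ a ∈ S}, V x)) =
      TensorProduct.map X₁ LinearMap.id ∘ₗ TensorProduct.map X₂ LinearMap.id := by
    rw [← TensorProduct.map_comp]; rfl
  rw [this, LinearMap.comp_assoc, hX₂, ← LinearMap.comp_assoc, hX₁, LinearMap.comp_assoc]

lemma supp_congr {S T : Set Λ} (h : S = T)
    {W : (⨂[ℂ] x : Λ, V x) →ₗ[ℂ] ⨂[ℂ] x : Λ, V x}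
    (hW : SupportedOn V S W) : SupportedOn V T W := h ▸ hW

/-- Reindexing equivalence for `T` inside the complement of `S`. -/
def σT (S T : Set Λ) (hd : Disjoint S T) :
    {a : Λ // a ∈ T} ≃ {x : {a : Λ // ¬ a ∈ S} // (x : Λ) ∈ T} where
  toFun a := ⟨⟨a.1, fun hS => (Set.disjoint_left.mp hd hS) a.2⟩, a.2⟩
  invFun x := ⟨x.1.1, x.2⟩
  left_inv _ := rfl
  right_inv _ := rfl

/-- Reindexing equivalence for the complement of `U = S ∪ T` inside the complement of `S`. -/
def σR (S T U : Set Λ) (hU : ∀ a : Λ, a ∈ U ↔ a ∈ S ∨ a ∈ T) :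
    {a : Λ // ¬ a ∈ U} ≃ {x : {a : Λ // ¬ a ∈ S} // ¬ (x : Λ) ∈ T} where
  toFun a := ⟨⟨a.1, fun h => a.2 ((hU a.1).mpr (Or.inl h))⟩,
    fun h => a.2 ((hU a.1).mpr (Or.inr h))⟩
  invFun x := ⟨x.1.1, fun h => ((hU x.1.1).mp h).elim x.1.2 x.2⟩
  left_inv _ := rfl
  right_inv _ := rfl

/-- Merge a tensor over `T` and a tensor over `(S ∪ T)ᶜ` into a tensor over `Sᶜ`. -/
def phi (S T U : Set Λ) (hd : Disjoint S T) (hU : ∀ a : Λ, a ∈ U ↔ a ∈ S ∨ a ∈ T) :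
    ((⨂[ℂ] x : {a : Λ // a ∈ T}, V x) ⊗[ℂ] (⨂[ℂ] x : {a : Λ // ¬ a ∈ U}, V x)) →ₗ[ℂ]
      ⨂[ℂ] x : {a : Λ // ¬ a ∈ S}, V x :=
  (mrg (M := fun x : {a : Λ // ¬ a ∈ S} => V x) (fun x => (x : Λ) ∈ T)) ∘ₗ
    TensorProduct.map
      (PiTensorProduct.reindex ℂ (fun a : {a : Λ // a ∈ T} => V a) (σT S T hd)).toLinearMap
      (PiTensorProduct.reindex ℂ (fun a : {a : Λ // ¬ a ∈ U} => V a) (σR S T U hU)).toLinearMap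

lemma phi_tmul (S T U : Set Λ) (hd : Disjoint S T) (hU : ∀ a : Λ, a ∈ U ↔ a ∈ S ∨ a ∈ T)
    (f : ∀ x : {a : Λ // a ∈ T}, V x) (g : ∀ x : {a : Λ // ¬ a ∈ U}, V x) :
    phi V S T U hd hU (tprod ℂ f ⊗ₜ[ℂ] tprod ℂ g) =
      tprod ℂ (mixF (fun x : {a : Λ // ¬ a ∈ S} => (x : Λ) ∈ T)
        (fun i => f ((σT S T hd).symm i)) (fun i => g ((σR S T U hU).symm i))) := by
  simp only [phi, LinearMap.comp_apply, TensorProduct.map_tmul, LinearEquiv.coe_coe,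
    PiTensorProduct.reindex_tprod, mrg_tmul]
  have h1 := PiTensorProduct.reindex_tprod (R := ℂ) (s := fun a : {a : Λ // a ∈ T} => V a)
    (σT S T hd) f
  have h2 := PiTensorProduct.reindex_tprod (R := ℂ) (s := fun a : {a : Λ // ¬ a ∈ U} => V a)
    (σR S T U hU) g
  refine Eq.trans ?_ (mrg_tmul _ _ _)
  refine congrArg _ ?_
  refine (TensorProduct.map_tmul _ _ _ _).trans ?_
  exact congrArg₂ (· ⊗ₜ[ℂ] ·) h1 h2

end Supp2

section Nat
variable {M₁ M₂ M₃ N₁ N₂ N₃ : Type*}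
  [AddCommGroup M₁] [AddCommGroup M₂] [AddCommGroup M₃]
  [AddCommGroup N₁] [AddCommGroup N₂] [AddCommGroup N₃]
  [Module ℂ M₁] [Module ℂ M₂] [Module ℂ M₃] [Module ℂ N₁] [Module ℂ N₂] [Module ℂ N₃]

lemma ext_t3 {Q : Type*} [AddCommGroup Q] [Module ℂ Q]
    {F G : M₁ ⊗[ℂ] (M₂ ⊗[ℂ] M₃) →ₗ[ℂ] Q}
    (h : ∀ x y z, F (x ⊗ₜ[ℂ] (y ⊗ₜ[ℂ] z)) = G (x ⊗ₜ[ℂ] (y ⊗ₜ[ℂ] z))) : F = G := by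
  apply TensorProduct.ext
  apply LinearMap.ext; intro x
  apply TensorProduct.ext'
  intro y z
  simpa using h x y z

lemma leftComm_nat (f : M₁ →ₗ[ℂ] N₁) (g : M₂ →ₗ[ℂ] N₂) (h : M₃ →ₗ[ℂ] N₃) :
    (TensorProduct.leftComm ℂ N₁ N₂ N₃).toLinearMap ∘ₗ
        TensorProduct.map f (TensorProduct.map g h) =
      TensorProduct.map g (TensorProduct.map f h) ∘ₗ
        (TensorProduct.leftComm ℂ M₁ M₂ M₃).toLinearMap := by
  apply ext_t3; intro x y z
  simp [TensorProduct.leftComm_tmul]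

lemma assoc_nat (f : M₁ →ₗ[ℂ] N₁) (g : M₂ →ₗ[ℂ] N₂) (h : M₃ →ₗ[ℂ] N₃) :
    (TensorProduct.assoc ℂ N₁ N₂ N₃).toLinearMap ∘ₗ
        TensorProduct.map (TensorProduct.map f g) h =
      TensorProduct.map f (TensorProduct.map g h) ∘ₗ
        (TensorProduct.assoc ℂ M₁ M₂ M₃).toLinearMap := by
  apply TensorProduct.ext_threefold; intro x y z
  simp

end Nat

section Generic3
open scoped Classical
variable {ι₁ ι₂ ι₃ : Type*} {M₁ : ι₁ → Type*} {M₂ : ι₂ → Type*} {M₃ : ι₃ → Type*}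
  [∀ i, AddCommGroup (M₁ i)] [∀ i, Module ℂ (M₁ i)]
  [∀ i, AddCommGroup (M₂ i)] [∀ i, Module ℂ (M₂ i)]
  [∀ i, AddCommGroup (M₃ i)] [∀ i, Module ℂ (M₃ i)]

lemma ext₃ {N : Type*} [AddCommGroup N] [Module ℂ N]
    {F G : ((⨂[ℂ] i, M₁ i) ⊗[ℂ] ((⨂[ℂ] i, M₂ i) ⊗[ℂ] (⨂[ℂ] i, M₃ i))) →ₗ[ℂ] N}
    (h : ∀ f g k, F (tprod ℂ f ⊗ₜ[ℂ] (tprod ℂ g ⊗ₜ[ℂ] tprod ℂ k)) =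
      G (tprod ℂ f ⊗ₜ[ℂ] (tprod ℂ g ⊗ₜ[ℂ] tprod ℂ k))) : F = G := by
  apply TensorProduct.ext
  apply pi_ext; intro f
  apply ext₂; intro g k
  simpa using h f g k

lemma ext₃' {N : Type*} [AddCommGroup N] [Module ℂ N]
    {F G : (((⨂[ℂ] i, M₁ i) ⊗[ℂ] (⨂[ℂ] i, M₂ i)) ⊗[ℂ] (⨂[ℂ] i, M₃ i)) →ₗ[ℂ] N}
    (h : ∀ f g k, F ((tprod ℂ f ⊗ₜ[ℂ] tprod ℂ g) ⊗ₜ[ℂ] tprod ℂ k) =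
      G ((tprod ℂ f ⊗ₜ[ℂ] tprod ℂ g) ⊗ₜ[ℂ] tprod ℂ k)) : F = G := by
  apply TensorProduct.ext
  apply ext₂; intro f g
  apply pi_ext; intro k
  simpa using h f g k

end Generic3

section Supp3
open scoped Classical
variable {Λ : Type*} (V : Λ → Type*) [∀ x, AddCommGroup (V x)] [∀ x, Module ℂ (V x)]

/-- `assemble` as a linear equivalence. -/
def assembleE (S : Set Λ) :
    ((⨂[ℂ] x : {a : Λ // a ∈ S}, V x) ⊗[ℂ] (⨂[ℂ] x : {a : Λ // ¬ a ∈ S}, V x)) ≃ₗ[ℂ]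
      ⨂[ℂ] x : Λ, V x :=
  LinearEquiv.ofLinear (assemble V S) (splt (M := fun x : Λ => V x) (· ∈ S))
    (mrg_splt _) (splt_mrg _)

lemma assembleE_coe (S : Set Λ) : (assembleE V S).toLinearMap = assemble V S := rfl

lemma assemble_surj (S : Set Λ) : Function.Surjective (assemble V S) :=
  (assembleE V S).surjective

/-- The triple merge map `(⨂ S) ⊗ ((⨂ T) ⊗ (⨂ (S∪T)ᶜ)) →ₗ ⨂ Λ`. -/
def m3 (S T U : Set Λ) (hd : Disjoint S T) (hU : ∀ a : Λ, a ∈ U ↔ a ∈ S ∨ a ∈ T) :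
    ((⨂[ℂ] x : {a : Λ // a ∈ S}, V x) ⊗[ℂ]
      ((⨂[ℂ] x : {a : Λ // a ∈ T}, V x) ⊗[ℂ] (⨂[ℂ] x : {a : Λ // ¬ a ∈ U}, V x))) →ₗ[ℂ]
      ⨂[ℂ] x : Λ, V x :=
  assemble V S ∘ₗ TensorProduct.map LinearMap.id (phi V S T U hd hU)

lemma m3_tmul (S T U : Set Λ) (hd : Disjoint S T) (hU : ∀ a : Λ, a ∈ U ↔ a ∈ S ∨ a ∈ T)
    (f : ∀ x : {a : Λ // a ∈ S}, V x) (g : ∀ x : {a : Λ // a ∈ T}, V x)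
    (k : ∀ x : {a : Λ // ¬ a ∈ U}, V x) :
    m3 V S T U hd hU (tprod ℂ f ⊗ₜ[ℂ] (tprod ℂ g ⊗ₜ[ℂ] tprod ℂ k)) =
      tprod ℂ (mixF (· ∈ S) f
        (mixF (fun x : {a : Λ // ¬ a ∈ S} => (x : Λ) ∈ T)
          (fun i => g ((σT S T hd).symm i)) (fun i => k ((σR S T U hU).symm i)))) := by
  simp only [m3, LinearMap.comp_apply, TensorProduct.map_tmul, LinearMap.id_apply,
    phi_tmul, assemble_tmul]

/-- The triple merge hits every `tprod`. -/
lemma m3_tprod_mem (S T U : Set Λ) (hd : Disjoint S T)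
    (hU : ∀ a : Λ, a ∈ U ↔ a ∈ S ∨ a ∈ T) (v : ∀ x : Λ, V x) :
    m3 V S T U hd hU
      ((tprod ℂ fun x : {a : Λ // a ∈ S} => v x) ⊗ₜ[ℂ]
        ((tprod ℂ fun x : {a : Λ // a ∈ T} => v x) ⊗ₜ[ℂ]
          tprod ℂ fun x : {a : Λ // ¬ a ∈ U} => v x)) = tprod ℂ v := by
  rw [m3_tmul]
  congr 1
  funext x
  by_cases hS : x ∈ S <;> by_cases hT : x ∈ T <;>
    simp [mixF, hS, hT, σT, σR, hU]

/-- Symmetry of the triple merge in its first two blocks. -/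
lemma m3_comm (S T U : Set Λ) (hd : Disjoint S T) (hU : ∀ a : Λ, a ∈ U ↔ a ∈ S ∨ a ∈ T) :
    m3 V S T U hd hU =
      m3 V T S U hd.symm (fun a => (hU a).trans or_comm) ∘ₗ
        (TensorProduct.leftComm ℂ _ _ _).toLinearMap := by
  apply ext₃; intro f g k
  rw [LinearMap.comp_apply, LinearEquiv.coe_toLinearMap, TensorProduct.leftComm_tmul,
    m3_tmul, m3_tmul]
  congr 1
  funext x
  by_cases hS : x ∈ S <;> by_cases hT : x ∈ T
  · exact absurd hT (Set.disjoint_left.mp hd hS)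
  · simp [mixF, hS, hT, σT, σR]
  · simp [mixF, hS, hT, σT, σR]
  · simp [mixF, hS, hT, σT, σR]

end Supp3

section Supp4
open scoped Classical
variable {Λ : Type*} (V : Λ → Type*) [∀ x, AddCommGroup (V x)] [∀ x, Module ℂ (V x)]

def σU1 (S T U : Set Λ) (hU : ∀ a : Λ, a ∈ U ↔ a ∈ S ∨ a ∈ T) :
    {a : Λ // a ∈ S} ≃ {x : {a : Λ // a ∈ U} // (x : Λ) ∈ S} where
  toFun a := ⟨⟨a.1, (hU a.1).mpr (Or.inl a.2)⟩, a.2⟩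
  invFun x := ⟨x.1.1, x.2⟩
  left_inv _ := rfl
  right_inv _ := rfl

def σU2 (S T U : Set Λ) (hd : Disjoint S T) (hU : ∀ a : Λ, a ∈ U ↔ a ∈ S ∨ a ∈ T) :
    {a : Λ // a ∈ T} ≃ {x : {a : Λ // a ∈ U} // ¬ (x : Λ) ∈ S} where
  toFun a := ⟨⟨a.1, (hU a.1).mpr (Or.inr a.2)⟩, fun hS => Set.disjoint_left.mp hd hS a.2⟩
  invFun x := ⟨x.1.1, ((hU x.1.1).mp x.1.2).resolve_left x.2⟩
  left_inv _ := rfl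
  right_inv _ := rfl

/-- The equivalence `(⨂ S) ⊗ (⨂ T) ≃ ⨂ U` for a disjoint union `U = S ∪ T`. -/
def psiE (S T U : Set Λ) (hd : Disjoint S T) (hU : ∀ a : Λ, a ∈ U ↔ a ∈ S ∨ a ∈ T) :
    ((⨂[ℂ] x : {a : Λ // a ∈ S}, V x) ⊗[ℂ] (⨂[ℂ] x : {a : Λ // a ∈ T}, V x)) ≃ₗ[ℂ]
      ⨂[ℂ] x : {a : Λ // a ∈ U}, V x :=
  (TensorProduct.congr
    (PiTensorProduct.reindex ℂ (fun a : {a : Λ // a ∈ S} => V a) (σU1 S T U hU))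
    (PiTensorProduct.reindex ℂ (fun a : {a : Λ // a ∈ T} => V a) (σU2 S T U hd hU))).trans
    (mrgE (M := fun x : {a : Λ // a ∈ U} => V x) (fun x => (x : Λ) ∈ S))

lemma psiE_tmul (S T U : Set Λ) (hd : Disjoint S T) (hU : ∀ a : Λ, a ∈ U ↔ a ∈ S ∨ a ∈ T)
    (f : ∀ x : {a : Λ // a ∈ S}, V x) (g : ∀ x : {a : Λ // a ∈ T}, V x) :
    psiE V S T U hd hU (tprod ℂ f ⊗ₜ[ℂ] tprod ℂ g) =
      tprod ℂ (mixF (fun x : {a : Λ // a ∈ U} => (x : Λ) ∈ S)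
        (fun i => f ((σU1 S T U hU).symm i)) (fun i => g ((σU2 S T U hd hU).symm i))) := by
  simp only [psiE, LinearEquiv.trans_apply, TensorProduct.congr_tmul]
  have h1 := PiTensorProduct.reindex_tprod (R := ℂ) (s := fun a : {a : Λ // a ∈ S} => V a)
    (σU1 S T U hU) f
  have h2 := PiTensorProduct.reindex_tprod (R := ℂ) (s := fun a : {a : Λ // a ∈ T} => V a)
    (σU2 S T U hd hU) g
  refine Eq.trans ?_ (mrg_tmul (M := fun x : {a : Λ // a ∈ U} => V x) _ _ _)
  refine (LinearEquiv.trans_apply _).trans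
    (congrArg (mrgE (M := fun x : {a : Λ // a ∈ U} => V x) (fun x => (x : Λ) ∈ S)) ?_)
  refine (TensorProduct.congr_tmul _ _ _ _).trans ?_
  exact congrArg₂ (· ⊗ₜ[ℂ] ·) h1 h2

/-- Compatibility of the triple merge with the pairwise merge. -/
lemma m3_assoc (S T U : Set Λ) (hd : Disjoint S T) (hU : ∀ a : Λ, a ∈ U ↔ a ∈ S ∨ a ∈ T) :
    m3 V S T U hd hU ∘ₗ (TensorProduct.assoc ℂ _ _ _).toLinearMap =
      assemble V U ∘ₗ
        TensorProduct.map (psiE V S T U hd hU).toLinearMap LinearMap.id := by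
  apply ext₃'; intro f g k
  rw [LinearMap.comp_apply, LinearEquiv.coe_toLinearMap, TensorProduct.assoc_tmul, m3_tmul,
    LinearMap.comp_apply, TensorProduct.map_tmul, LinearEquiv.coe_toLinearMap, psiE_tmul,
    LinearMap.id_apply, assemble_tmul]
  congr 1
  funext x
  by_cases hS : x ∈ S <;> by_cases hT : x ∈ T
  · exact absurd hT (Set.disjoint_left.mp hd hS)
  · have hxU : x ∈ U := (hU x).mpr (Or.inl hS)
    simp [mixF, hS, hT, hxU, σU1, σU2, σT, σR]
  · have hxU : x ∈ U := (hU x).mpr (Or.inr hT)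
    simp [mixF, hS, hT, hxU, σU1, σU2, σT, σR]
  · have hxU : ¬ x ∈ U := fun h => ((hU x).mp h).elim hS hT
    simp [mixF, hS, hT, hxU, σU1, σU2, σT, σR]

end Supp4

section Supp5
open scoped Classical
variable {Λ : Type*} (V : Λ → Type*) [∀ x, AddCommGroup (V x)] [∀ x, Module ℂ (V x)]

lemma supp_act_m3 {S : Set Λ} (T U : Set Λ) (hd : Disjoint S T)
    (hU : ∀ a : Λ, a ∈ U ↔ a ∈ S ∨ a ∈ T)
    {W : (⨂[ℂ] x : Λ, V x) →ₗ[ℂ] ⨂[ℂ] x : Λ, V x}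
    {WS : (⨂[ℂ] x : {a : Λ // a ∈ S}, V x) →ₗ[ℂ] ⨂[ℂ] x : {a : Λ // a ∈ S}, V x}
    (hW : W ∘ₗ assemble V S = assemble V S ∘ₗ TensorProduct.map WS LinearMap.id) :
    W ∘ₗ m3 V S T U hd hU = m3 V S T U hd hU ∘ₗ TensorProduct.map WS LinearMap.id := by
  unfold m3
  rw [← LinearMap.comp_assoc, hW, LinearMap.comp_assoc, LinearMap.comp_assoc]
  congr 1
  rw [← TensorProduct.map_comp, ← TensorProduct.map_comp,
    LinearMap.comp_id, LinearMap.id_comp, LinearMap.comp_id, LinearMap.id_comp]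

lemma supp_act2_m3 {T : Set Λ} (S U : Set Λ) (hd : Disjoint S T)
    (hU : ∀ a : Λ, a ∈ U ↔ a ∈ S ∨ a ∈ T)
    {A : (⨂[ℂ] x : Λ, V x) →ₗ[ℂ] ⨂[ℂ] x : Λ, V x}
    {AT : (⨂[ℂ] x : {a : Λ // a ∈ T}, V x) →ₗ[ℂ] ⨂[ℂ] x : {a : Λ // a ∈ T}, V x}
    (hA : A ∘ₗ assemble V T = assemble V T ∘ₗ TensorProduct.map AT LinearMap.id) :
    A ∘ₗ m3 V S T U hd hU =
      m3 V S T U hd hU ∘ₗ TensorProduct.map LinearMap.id (TensorProduct.map AT LinearMap.id) := by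
  have hc := m3_comm V S T U hd hU
  have h1 := supp_act_m3 V S U hd.symm (fun a => (hU a).trans or_comm) hA
  have h2 := leftComm_nat (LinearMap.id (M := ⨂[ℂ] x : {a : Λ // a ∈ S}, V x)) AT
    (LinearMap.id (M := ⨂[ℂ] x : {a : Λ // ¬ a ∈ U}, V x))
  rw [TensorProduct.map_id] at h2
  rw [hc, ← LinearMap.comp_assoc, h1, LinearMap.comp_assoc, ← h2, ← LinearMap.comp_assoc]

lemma supp_commute {S T : Set Λ} (hd : Disjoint S T)
    {Wo A : (⨂[ℂ] x : Λ, V x) →ₗ[ℂ] ⨂[ℂ] x : Λ, V x}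
    (hW : SupportedOn V S Wo) (hA : SupportedOn V T A) :
    Wo ∘ₗ A = A ∘ₗ Wo := by
  obtain ⟨WS, hW⟩ := hW
  obtain ⟨AT, hA⟩ := hA
  set U := S ∪ T with hUdef
  have hU : ∀ a : Λ, a ∈ U ↔ a ∈ S ∨ a ∈ T := fun a => Set.mem_union a S T
  have h1 := supp_act_m3 V T U hd hU hW
  have h2 := supp_act2_m3 V S U hd hU hA
  have hWA : (Wo ∘ₗ A) ∘ₗ m3 V S T U hd hU =
      m3 V S T U hd hU ∘ₗ (TensorProduct.map WS LinearMap.id ∘ₗ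
        TensorProduct.map LinearMap.id (TensorProduct.map AT LinearMap.id)) := by
    rw [LinearMap.comp_assoc, h2, ← LinearMap.comp_assoc, h1, LinearMap.comp_assoc]
  have hAW : (A ∘ₗ Wo) ∘ₗ m3 V S T U hd hU =
      m3 V S T U hd hU ∘ₗ (TensorProduct.map LinearMap.id (TensorProduct.map AT LinearMap.id) ∘ₗ
        TensorProduct.map WS LinearMap.id) := by
    rw [LinearMap.comp_assoc, h1, ← LinearMap.comp_assoc, h2, LinearMap.comp_assoc]
  have h3 : (Wo ∘ₗ A) ∘ₗ m3 V S T U hd hU = (A ∘ₗ Wo) ∘ₗ m3 V S T U hd hU := by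
    rw [hWA, hAW]
    congr 1
    rw [← TensorProduct.map_comp, ← TensorProduct.map_comp,
      LinearMap.comp_id, LinearMap.id_comp, LinearMap.comp_id, LinearMap.id_comp]
  apply pi_ext; intro v
  have := LinearMap.congr_fun h3
    ((tprod ℂ fun x : {a : Λ // a ∈ S} => v x) ⊗ₜ[ℂ]
      ((tprod ℂ fun x : {a : Λ // a ∈ T} => v x) ⊗ₜ[ℂ]
        tprod ℂ fun x : {a : Λ // ¬ a ∈ U} => v x))
  simpa [m3_tprod_mem] using this

lemma supp_union {S T : Set Λ} (hd : Disjoint S T)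
    {Wo A : (⨂[ℂ] x : Λ, V x) →ₗ[ℂ] ⨂[ℂ] x : Λ, V x}
    (hW : SupportedOn V S Wo) (hA : SupportedOn V T A) :
    SupportedOn V (S ∪ T) (Wo ∘ₗ A) := by
  obtain ⟨WS, hW⟩ := hW
  obtain ⟨AT, hA⟩ := hA
  have hU : ∀ a : Λ, a ∈ S ∪ T ↔ a ∈ S ∨ a ∈ T := fun a => Set.mem_union a S T
  let ψ : ((⨂[ℂ] x : {a : Λ // a ∈ S}, V x) ⊗[ℂ] (⨂[ℂ] x : {a : Λ // a ∈ T}, V x)) →ₗ[ℂ]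
      ⨂[ℂ] x : {a : Λ // a ∈ S ∪ T}, V x := (psiE V S T (S ∪ T) hd hU).toLinearMap
  let Z := ψ ∘ₗ TensorProduct.map WS AT ∘ₗ (psiE V S T (S ∪ T) hd hU).symm.toLinearMap
  refine ⟨Z, ?_⟩
  have hsurj : Function.Surjective
      (TensorProduct.map ψ (LinearMap.id (M := ⨂[ℂ] x : {a : Λ // ¬ a ∈ S ∪ T}, V x))) :=
    TensorProduct.map_surjective (psiE V S T (S ∪ T) hd hU).surjective
      (Function.surjective_id)
  rw [← LinearMap.cancel_right hsurj]
  have hassoc := m3_assoc V S T (S ∪ T) hd hU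
  have hanat := assoc_nat WS AT
    (LinearMap.id (M := ⨂[ℂ] x : {a : Λ // ¬ a ∈ S ∪ T}, V x))
  have hWm := supp_act_m3 V T (S ∪ T) hd hU hW
  have hAm := supp_act2_m3 V S (S ∪ T) hd hU hA
  have hWAm : (Wo ∘ₗ A) ∘ₗ m3 V S T (S ∪ T) hd hU =
      m3 V S T (S ∪ T) hd hU ∘ₗ TensorProduct.map WS (TensorProduct.map AT LinearMap.id) := by
    calc (Wo ∘ₗ A) ∘ₗ m3 V S T (S ∪ T) hd hU
        = Wo ∘ₗ (A ∘ₗ m3 V S T (S ∪ T) hd hU) := rfl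
      _ = Wo ∘ₗ (m3 V S T (S ∪ T) hd hU ∘ₗ
            TensorProduct.map LinearMap.id (TensorProduct.map AT LinearMap.id)) := by rw [hAm]
      _ = (Wo ∘ₗ m3 V S T (S ∪ T) hd hU) ∘ₗ
            TensorProduct.map LinearMap.id (TensorProduct.map AT LinearMap.id) := rfl
      _ = (m3 V S T (S ∪ T) hd hU ∘ₗ TensorProduct.map WS LinearMap.id) ∘ₗ
            TensorProduct.map LinearMap.id (TensorProduct.map AT LinearMap.id) := by rw [hWm]
      _ = m3 V S T (S ∪ T) hd hU ∘ₗ (TensorProduct.map WS LinearMap.id ∘ₗ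
            TensorProduct.map LinearMap.id (TensorProduct.map AT LinearMap.id)) := rfl
      _ = m3 V S T (S ∪ T) hd hU ∘ₗ
            TensorProduct.map WS (TensorProduct.map AT LinearMap.id) := by
          rw [← TensorProduct.map_comp, LinearMap.comp_id, LinearMap.id_comp]
  have eZ : Z ∘ₗ ψ = ψ ∘ₗ TensorProduct.map WS AT := by
    apply LinearMap.ext; intro x
    simp only [Z, ψ, LinearMap.comp_apply, LinearEquiv.coe_toLinearMap,
      LinearEquiv.symm_apply_apply]
  calc (Wo ∘ₗ A) ∘ₗ assemble V (S ∪ T) ∘ₗ TensorProduct.map ψ LinearMap.id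
      = (Wo ∘ₗ A) ∘ₗ (m3 V S T (S ∪ T) hd hU ∘ₗ (TensorProduct.assoc ℂ _ _ _).toLinearMap) := by
        rw [hassoc]
    _ = ((Wo ∘ₗ A) ∘ₗ m3 V S T (S ∪ T) hd hU) ∘ₗ (TensorProduct.assoc ℂ _ _ _).toLinearMap := rfl
    _ = (m3 V S T (S ∪ T) hd hU ∘ₗ TensorProduct.map WS (TensorProduct.map AT LinearMap.id)) ∘ₗ
          (TensorProduct.assoc ℂ _ _ _).toLinearMap := by rw [hWAm]
    _ = m3 V S T (S ∪ T) hd hU ∘ₗ (TensorProduct.map WS (TensorProduct.map AT LinearMap.id) ∘ₗ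
          (TensorProduct.assoc ℂ _ _ _).toLinearMap) := rfl
    _ = m3 V S T (S ∪ T) hd hU ∘ₗ ((TensorProduct.assoc ℂ _ _ _).toLinearMap ∘ₗ
          TensorProduct.map (TensorProduct.map WS AT) LinearMap.id) := by rw [hanat]
    _ = (m3 V S T (S ∪ T) hd hU ∘ₗ (TensorProduct.assoc ℂ _ _ _).toLinearMap) ∘ₗ
          TensorProduct.map (TensorProduct.map WS AT) LinearMap.id := rfl
    _ = (assemble V (S ∪ T) ∘ₗ TensorProduct.map ψ LinearMap.id) ∘ₗ
          TensorProduct.map (TensorProduct.map WS AT) LinearMap.id := by rw [hassoc]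
    _ = assemble V (S ∪ T) ∘ₗ (TensorProduct.map ψ LinearMap.id ∘ₗ
          TensorProduct.map (TensorProduct.map WS AT) LinearMap.id) := rfl
    _ = assemble V (S ∪ T) ∘ₗ TensorProduct.map (ψ ∘ₗ TensorProduct.map WS AT) LinearMap.id := by
          rw [← TensorProduct.map_comp, LinearMap.comp_id]
    _ = assemble V (S ∪ T) ∘ₗ TensorProduct.map (Z ∘ₗ ψ) LinearMap.id := by rw [eZ]
    _ = assemble V (S ∪ T) ∘ₗ (TensorProduct.map Z LinearMap.id ∘ₗ
          TensorProduct.map ψ LinearMap.id) := by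
          rw [← TensorProduct.map_comp, LinearMap.comp_id]
    _ = (assemble V (S ∪ T) ∘ₗ TensorProduct.map Z LinearMap.id) ∘ₗ
          TensorProduct.map ψ LinearMap.id := rfl

end Supp5

section Supp6
open scoped Classical
variable {Λ : Type*} (V : Λ → Type*) [∀ x, AddCommGroup (V x)] [∀ x, Module ℂ (V x)]

lemma supp_mono {S T : Set Λ} (hST : S ⊆ T)
    {Wo : (⨂[ℂ] x : Λ, V x) →ₗ[ℂ] ⨂[ℂ] x : Λ, V x}
    (hW : SupportedOn V S Wo) : SupportedOn V T Wo := by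
  have hd : Disjoint S (T \ S) := Set.disjoint_sdiff_right
  have h := supp_union V hd hW (supp_id V (T \ S))
  rw [LinearMap.comp_id] at h
  exact supp_congr V (Set.union_diff_cancel hST) h

lemma dual_exists {M : Type*} [AddCommGroup M] [Module ℂ M] {w : M} (hw : w ≠ 0) :
    ∃ φ : M →ₗ[ℂ] ℂ, φ w = 1 := by
  have h : ¬ ∀ φ : Module.Dual ℂ M, φ w = 0 := by
    rw [Module.forall_dual_apply_eq_zero_iff]; exact hw
  push_neg at h
  obtain ⟨φ, hφ⟩ := h
  exact ⟨(φ w)⁻¹ • φ, by simp [inv_mul_cancel₀ hφ]⟩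

lemma exists_unit_dual_pair {ι : Type*} [Fintype ι] {M : ι → Type*}
    [∀ i, AddCommGroup (M i)] [∀ i, Module ℂ (M i)] [∀ i, Nontrivial (M i)] :
    ∃ w : ⨂[ℂ] i, M i, ∃ φ : (⨂[ℂ] i, M i) →ₗ[ℂ] ℂ, φ w = 1 := by
  have hv : ∀ i, ∃ v : M i, v ≠ 0 := fun i => exists_ne 0
  choose v hvne using hv
  choose ψ hψ using fun i => dual_exists (hvne i)
  refine ⟨tprod ℂ v, PiTensorProduct.lift
    ((MultilinearMap.mkPiAlgebra ℂ ι ℂ).compLinearMap ψ), ?_⟩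
  simp [hψ]

lemma supp_inverse [Fintype Λ] [∀ x, Nontrivial (V x)] {S : Set Λ}
    {P Q : (⨂[ℂ] x : Λ, V x) →ₗ[ℂ] ⨂[ℂ] x : Λ, V x}
    (hP : SupportedOn V S P) (h1 : P ∘ₗ Q = LinearMap.id) (h2 : Q ∘ₗ P = LinearMap.id) :
    SupportedOn V S Q := by
  obtain ⟨X, hX⟩ := hP
  have hPinj : Function.Injective P :=
    Function.LeftInverse.injective (g := Q) (fun x => LinearMap.congr_fun h2 x)
  have hPsurj : Function.Surjective P :=
    Function.RightInverse.surjective (g := Q) (fun x => LinearMap.congr_fun h1 x)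
  have hfun : ⇑(TensorProduct.map X (LinearMap.id
      (M := ⨂[ℂ] x : {a : Λ // ¬ a ∈ S}, V x))) =
      ⇑(assembleE V S).symm ∘ ⇑P ∘ ⇑(assembleE V S) := by
    funext z
    have := LinearMap.congr_fun hX z
    simp only [LinearMap.comp_apply] at this
    have h' : P ((assembleE V S) z) = (assembleE V S) (TensorProduct.map X LinearMap.id z) := by
      exact this
    simp [Function.comp, h', LinearEquiv.symm_apply_apply]
  have hmapbij : Function.Bijective
      (TensorProduct.map X (LinearMap.id (M := ⨂[ℂ] x : {a : Λ // ¬ a ∈ S}, V x))) := by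
    rw [hfun]
    exact ((assembleE V S).symm.bijective.comp ⟨hPinj, hPsurj⟩).comp (assembleE V S).bijective
  obtain ⟨w₀, φ, hφ⟩ := exists_unit_dual_pair (M := fun x : {a : Λ // ¬ a ∈ S} => V x)
  set L : ((⨂[ℂ] x : {a : Λ // a ∈ S}, V x) ⊗[ℂ] (⨂[ℂ] x : {a : Λ // ¬ a ∈ S}, V x)) →ₗ[ℂ]
      ⨂[ℂ] x : {a : Λ // a ∈ S}, V x :=
    (TensorProduct.rid ℂ _).toLinearMap ∘ₗ LinearMap.lTensor _ φ with hL
  have hLtmul : ∀ a w, L (a ⊗ₜ[ℂ] w) = φ w • a := by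
    intro a w; simp [hL]
  have hXinj : Function.Injective X := by
    intro a b hab
    have h0 : TensorProduct.map X LinearMap.id (a ⊗ₜ[ℂ] w₀) =
        TensorProduct.map X LinearMap.id (b ⊗ₜ[ℂ] w₀) := by
      simp [TensorProduct.map_tmul, hab]
    have := hmapbij.injective h0
    have := congrArg L this
    rwa [hLtmul, hLtmul, hφ, one_smul, one_smul] at this
  have hcomm : L ∘ₗ TensorProduct.map X LinearMap.id = X ∘ₗ L := by
    apply TensorProduct.ext'
    intro a w
    simp [hLtmul]
  have hXsurj : Function.Surjective X := by
    intro u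
    obtain ⟨t, ht⟩ := hmapbij.surjective (u ⊗ₜ[ℂ] w₀)
    refine ⟨L t, ?_⟩
    have := LinearMap.congr_fun hcomm t
    simp only [LinearMap.comp_apply, ht] at this
    rw [← this, hLtmul, hφ, one_smul]
  set XE := LinearEquiv.ofBijective X ⟨hXinj, hXsurj⟩ with hXE
  have hXX' : X ∘ₗ XE.symm.toLinearMap = LinearMap.id := by
    apply LinearMap.ext; intro u
    exact XE.apply_symm_apply u
  refine ⟨XE.symm.toLinearMap, ?_⟩
  have hmapid : TensorProduct.map X (LinearMap.id
        (M := ⨂[ℂ] x : {a : Λ // ¬ a ∈ S}, V x)) ∘ₗ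
      TensorProduct.map XE.symm.toLinearMap LinearMap.id = LinearMap.id := by
    rw [← TensorProduct.map_comp, hXX', LinearMap.comp_id, TensorProduct.map_id]
  calc Q ∘ₗ assemble V S
      = Q ∘ₗ assemble V S ∘ₗ (TensorProduct.map X LinearMap.id ∘ₗ
          TensorProduct.map XE.symm.toLinearMap LinearMap.id) := by
        rw [hmapid, LinearMap.comp_id]
    _ = Q ∘ₗ ((assemble V S ∘ₗ TensorProduct.map X LinearMap.id) ∘ₗ
          TensorProduct.map XE.symm.toLinearMap LinearMap.id) := rfl
    _ = Q ∘ₗ ((P ∘ₗ assemble V S) ∘ₗ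
          TensorProduct.map XE.symm.toLinearMap LinearMap.id) := by rw [hX]
    _ = (Q ∘ₗ P) ∘ₗ (assemble V S ∘ₗ
          TensorProduct.map XE.symm.toLinearMap LinearMap.id) := rfl
    _ = LinearMap.id ∘ₗ (assemble V S ∘ₗ
          TensorProduct.map XE.symm.toLinearMap LinearMap.id) := by rw [h2]
    _ = assemble V S ∘ₗ TensorProduct.map XE.symm.toLinearMap LinearMap.id := by
        rw [LinearMap.id_comp]

end Supp6

lemma pairwise_commute_of_forall {M : Type*} [Monoid M] (l : List M)
    (h : ∀ x ∈ l, ∀ y ∈ l, Commute x y) : l.Pairwise Commute := by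
  induction l with
  | nil => simp
  | cons a t ih =>
    rw [List.pairwise_cons]
    exact ⟨fun y hy => h a (by simp) y (by simp [hy]),
      ih (fun x hx y hy => h x (by simp [hx]) y (by simp [hy]))⟩

section Supp7
open scoped Classical
variable {Λ : Type*} (V : Λ → Type*) [∀ x, AddCommGroup (V x)] [∀ x, Module ℂ (V x)]

lemma supp_list_prod {S : Set Λ} (l : List (Module.End ℂ (⨂[ℂ] x : Λ, V x)))
    (h : ∀ x ∈ l, SupportedOn V S x) : SupportedOn V S l.prod := by
  induction l with
  | nil => exact supp_id V S
  | cons a t ih =>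
    rw [List.prod_cons]
    exact supp_comp V (h a (by simp)) (ih (fun x hx => h x (by simp [hx])))

end Supp7

theorem support_growth_under_commuting_local_invertibles
    {Λ : Type*} [Fintype Λ] [MetricSpace Λ]
    (V : Λ → Type*) [∀ x, AddCommGroup (V x)] [∀ x, Module ℂ (V x)]
    [∀ x, FiniteDimensional ℂ (V x)] [∀ x, Nontrivial (V x)]
    (r : ℝ) (hr : 0 < r) (Y : Set Λ)
    (A : (⨂[ℂ] x : Λ, V x) →ₗ[ℂ] ⨂[ℂ] x : Λ, V x)
    (hA : SupportedOn V Y A)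
    (b : ℕ) (hb : 0 < b)
    (W : Fin b → ((⨂[ℂ] x : Λ, V x) →ₗ[ℂ] ⨂[ℂ] x : Λ, V x))
    (j : Fin b → Λ)
    (hWsupp : ∀ k, SupportedOn V {y : Λ | dist (j k) y < r} (W k))
    (hWcomm : ∀ k l, W k ∘ₗ W l = W l ∘ₗ W k)
    (hWinv : ∀ k, ∃ Wk' : (⨂[ℂ] x : Λ, V x) →ₗ[ℂ] ⨂[ℂ] x : Λ, V x,
      W k ∘ₗ Wk' = LinearMap.id ∧ Wk' ∘ₗ W k = LinearMap.id)
    (Vop Vinv : (⨂[ℂ] x : Λ, V x) →ₗ[ℂ] ⨂[ℂ] x : Λ, V x)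
    (hVop : Vop = (List.ofFn W).foldr (· ∘ₗ ·) LinearMap.id)
    (hinv₁ : Vop ∘ₗ Vinv = LinearMap.id) (hinv₂ : Vinv ∘ₗ Vop = LinearMap.id) :
    SupportedOn V {y : Λ | ∃ x ∈ Y, dist x y < 2 * r} (Vinv ∘ₗ A ∘ₗ Vop) := by
  classical
  set S₂ : Set Λ := {y : Λ | ∃ x ∈ Y, dist x y < 2 * r} with hS₂
  have hYS₂ : Y ⊆ S₂ := fun x hx => ⟨x, hx, by simpa using by positivity⟩
  -- the index-level predicate distinguishing gates that touch `Y`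
  set good : Fin b → Prop := fun k => ∃ z ∈ {y : Λ | dist (j k) y < r}, z ∈ Y with hgood
  -- good gates are supported in S₂
  have hgoodsupp : ∀ k, good k → SupportedOn V S₂ (W k) := by
    intro k hk
    obtain ⟨z, hz, hzY⟩ := hk
    refine supp_mono V (fun y hy => ?_) (hWsupp k)
    refine ⟨z, hzY, ?_⟩
    calc dist z y ≤ dist z (j k) + dist (j k) y := dist_triangle _ _ _
      _ < r + r := by
          have := hz
          rw [dist_comm]
          exact add_lt_add this hy
      _ = 2 * r := by ring
  -- bad gates commute with A
  have hbadcomm : ∀ k, ¬ good k → W k ∘ₗ A = A ∘ₗ W k := by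
    intro k hk
    refine supp_commute V ?_ (hWsupp k) hA
    rw [Set.disjoint_left]
    intro z hz hzY
    exact hk ⟨z, hz, hzY⟩
  -- list bookkeeping in the endomorphism monoid
  let p : Fin b → Bool := fun k => decide (good k)
  let l : List (Module.End ℂ (⨂[ℂ] x : Λ, V x)) := (List.finRange b).map W
  let lG : List (Module.End ℂ (⨂[ℂ] x : Λ, V x)) := ((List.finRange b).filter p).map W
  let lB : List (Module.End ℂ (⨂[ℂ] x : Λ, V x)) :=
    ((List.finRange b).filter (fun k => !p k)).map W
  have hmem : ∀ x ∈ l, ∃ k, x = W k := by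
    intro x hx; obtain ⟨k, _, rfl⟩ := List.mem_map.mp hx; exact ⟨k, rfl⟩
  have hmemG : ∀ x ∈ lG, ∃ k, good k ∧ x = W k := by
    intro x hx
    obtain ⟨k, hk, rfl⟩ := List.mem_map.mp hx
    exact ⟨k, by simpa [p] using (List.mem_filter.mp hk).2, rfl⟩
  have hmemB : ∀ x ∈ lB, ∃ k, ¬ good k ∧ x = W k := by
    intro x hx
    obtain ⟨k, hk, rfl⟩ := List.mem_map.mp hx
    refine ⟨k, ?_, rfl⟩
    have := (List.mem_filter.mp hk).2
    simpa [p] using this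
  have hWCom : ∀ k k', Commute (W k) (W k') := fun k k' => hWcomm k k'
  have hcomm2 : ∀ x ∈ lG ++ lB, ∀ y ∈ lG ++ lB, Commute x y := by
    intro x hx y hy
    rcases List.mem_append.mp hx with h | h <;> rcases List.mem_append.mp hy with h' | h' <;>
      [skip; skip; skip; skip] <;>
      · obtain ⟨k, _, rfl⟩ := (by first | exact hmemG _ h | exact hmemB _ h)
        obtain ⟨k', _, rfl⟩ := (by first | exact hmemG _ h' | exact hmemB _ h')
        exact hWCom k k'
  have hperm : List.Perm (lG ++ lB) l := by
    have := (List.filter_append_perm p (List.finRange b)).map W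
    simpa [lG, lB, l, List.map_append] using this
  have hpermBG : List.Perm (lB ++ lG) l := (List.perm_append_comm).trans hperm
  have hVopl : Vop = l.prod := by
    rw [hVop, List.prod_eq_foldr]
    rw [show l = List.ofFn W from (List.ofFn_eq_map).symm]
    rfl
  have hGB : lG.prod * lB.prod = Vop := by
    rw [hVopl, ← List.prod_append]
    exact (hperm.prod_eq' (pairwise_commute_of_forall _ hcomm2))
  have hBG : lB.prod * lG.prod = Vop := by
    rw [hVopl, ← List.prod_append]
    refine hpermBG.prod_eq' (pairwise_commute_of_forall _ ?_)
    intro x hx y hy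
    exact hcomm2 x (List.mem_append.mpr (List.mem_append.mp hx).symm)
      y (List.mem_append.mpr (List.mem_append.mp hy).symm)
  set Pg := lG.prod with hPg
  set Pb := lB.prod with hPb
  -- A commutes with Pb
  have hAPb : Commute A Pb := by
    refine Commute.list_prod_right _ _ (fun x hx => ?_)
    obtain ⟨k, hk, rfl⟩ := hmemB x hx
    exact (hbadcomm k hk).symm
  -- Vop commutes with Pg
  have hVopPg : Commute Vop Pg := by
    rw [hVopl]
    refine Commute.list_prod_left _ _ (fun x hx => ?_)
    obtain ⟨k, rfl⟩ := hmem x hx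
    refine Commute.list_prod_right _ _ (fun y hy => ?_)
    obtain ⟨k', _, rfl⟩ := hmemG y hy
    exact hWCom k k'
  have hinvmul₁ : Vop * Vinv = 1 := hinv₁
  have hinvmul₂ : Vinv * Vop = 1 := hinv₂
  have hVinvPg : Commute Vinv Pg := by
    unfold Commute SemiconjBy
    calc Vinv * Pg = Vinv * Pg * (Vop * Vinv) := by rw [hinvmul₁, mul_one]
      _ = Vinv * (Pg * Vop) * Vinv := by rw [mul_assoc, mul_assoc, mul_assoc]
      _ = Vinv * (Vop * Pg) * Vinv := by rw [(hVopPg.symm : Pg * Vop = Vop * Pg)]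
      _ = (Vinv * Vop) * (Pg * Vinv) := by rw [mul_assoc, mul_assoc, mul_assoc]
      _ = Pg * Vinv := by rw [hinvmul₂, one_mul]
  set Q := Vinv * Pb with hQ
  have hQPg : Q * Pg = 1 := by
    rw [hQ, mul_assoc, hBG, hinvmul₂]
  have hPgQ : Pg * Q = 1 := by
    rw [hQ, ← mul_assoc, ← hVinvPg.eq, mul_assoc, hGB, hinvmul₂]
  -- supports
  have hPgsupp : SupportedOn V S₂ Pg :=
    supp_list_prod V lG (fun x hx => by
      obtain ⟨k, hk, rfl⟩ := hmemG x hx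
      exact hgoodsupp k hk)
  have hQsupp : SupportedOn V S₂ Q :=
    supp_inverse V hPgsupp (show Pg ∘ₗ Q = LinearMap.id from hPgQ)
      (show Q ∘ₗ Pg = LinearMap.id from hQPg)
  have hAsupp : SupportedOn V S₂ A := supp_mono V hYS₂ hA
  have hfinal : Vinv ∘ₗ A ∘ₗ Vop = Q ∘ₗ (A ∘ₗ Pg) := by
    show Vinv * (A * Vop) = Q * (A * Pg)
    rw [hQ, ← hBG, ← mul_assoc A Pb Pg, hAPb.eq]
    simp [mul_assoc]
  rw [hfinal]
  exact supp_comp V hQsupp (supp_comp V hAsupp hPgsupp)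


end
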